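/- Let α ∈ ℝ with 0 < α < 1/2, let u, v, f, g : ℕ → ℝ be the sequences of the context, and set h(k) = 1/(f(k)·g(k)), w(0) = 0, w(k+1) = w(k) + h(k). With Π₃(k) = ∏_{j=1}^{k} ((j−α)(j−2α))/((j−1+α)(j−1+2α)) (empty product 1), the following closed formulas hold: h(3k) = Π₃(k) and h(3k+1) = ((k+1−2α)/(k+α))·Π₃(k) for all k ≥ 0, h(3k−1) = Π₃(k) for all k ≥ 1; and w(3k) = (k/(1−2α))·Π₃(k) and w(3k+1) = ((k+1−2α)/(1−2α))·Π₃(k) for all k ≥ 0, w(3k−1) = ((k−1+2α)/(1−2α))·Π₃(k) for all k ≥ 1. -/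

import Mathlib

/-- `Π₁(k) = ∏_{j=1}^{k} (j+2α)/(j−α)`. -/
noncomputable def Pi1 (α : ℝ) (k : ℕ) : ℝ :=
  ∏ j ∈ Finset.range k, (((j : ℝ) + 1) + 2 * α) / (((j : ℝ) + 1) - α)

/-- `Π₂(k) = ∏_{j=1}^{k} (j+α)/(j−2α)`. -/
noncomputable def Pi2 (α : ℝ) (k : ℕ) : ℝ :=
  ∏ j ∈ Finset.range k, (((j : ℝ) + 1) + α) / (((j : ℝ) + 1) - 2 * α)

/-- The axis values of the field `u`: `u(3k) = (2k/(k+2α))·Π₁(k)`,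
`u(3k+1) = ((2k+2α)/(k+2α))·Π₁(k)`, `u(3k+2) = 2·Π₁(k)`. -/
noncomputable def uSeq (α : ℝ) (n : ℕ) : ℝ :=
  if n % 3 = 0 then (2 * ((n / 3 : ℕ) : ℝ) / (((n / 3 : ℕ) : ℝ) + 2 * α)) * Pi1 α (n / 3)
  else if n % 3 = 1 then
    ((2 * ((n / 3 : ℕ) : ℝ) + 2 * α) / (((n / 3 : ℕ) : ℝ) + 2 * α)) * Pi1 α (n / 3)
  else 2 * Pi1 α (n / 3)

/-- The axis values of the field `f`: `f(0) = f(1) = 1` and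
`f(3k−1) = f(3k) = f(3k+1) = (2α/(k+2α))·Π₁(k)` for `k ≥ 1`. -/
noncomputable def fSeq (α : ℝ) (n : ℕ) : ℝ :=
  if n ≤ 1 then 1
  else (2 * α / ((((n + 1) / 3 : ℕ) : ℝ) + 2 * α)) * Pi1 α ((n + 1) / 3)

/-- The axis values of the field `v`: `v(3k) = (k/(k+α))·Π₂(k)`,
`v(3k+1) = Π₂(k)`, and `v(3k−1) = ((k−α)/(k+α))·Π₂(k)` for `k ≥ 1`. -/
noncomputable def vSeq (α : ℝ) (n : ℕ) : ℝ :=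
  if n % 3 = 0 then (((n / 3 : ℕ) : ℝ) / (((n / 3 : ℕ) : ℝ) + α)) * Pi2 α (n / 3)
  else if n % 3 = 1 then Pi2 α (n / 3)
  else (((((n + 1) / 3 : ℕ) : ℝ) - α) / ((((n + 1) / 3 : ℕ) : ℝ) + α))
    * Pi2 α ((n + 1) / 3)

/-- The axis values of the field `g`: `g(0) = 1` and
`g(3k−2) = g(3k−1) = g(3k) = (α/(k+α))·Π₂(k)` for `k ≥ 1`. -/
noncomputable def gSeq (α : ℝ) (n : ℕ) : ℝ :=
  if n = 0 then 1
  else (α / ((((n + 2) / 3 : ℕ) : ℝ) + α)) * Pi2 α ((n + 2) / 3)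

/-- The third field `h(k) = 1/(f(k)·g(k))`. -/
noncomputable def hSeq (α : ℝ) (n : ℕ) : ℝ := 1 / (fSeq α n * gSeq α n)

/-- The potential `w` of the third field: `w(0) = 0`, `w(k+1) = w(k) + h(k)`. -/
noncomputable def wSeq (α : ℝ) : ℕ → ℝ
  | 0 => 0
  | n + 1 => wSeq α n + hSeq α n

/-- `Π₃(k) = ∏_{j=1}^{k} ((j−α)(j−2α))/((j−1+α)(j−1+2α))`. -/
noncomputable def Pi3 (α : ℝ) (k : ℕ) : ℝ :=
  ∏ j ∈ Finset.range k,
    ((((j : ℝ) + 1) - α) * (((j : ℝ) + 1) - 2 * α)) / (((j : ℝ) + α) * ((j : ℝ) + 2 * α))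

/-!
For every `n`, including `n = 0, 1`, the fields read `f(n) = 2α/(m+2α)·Π₁(m)` with
`m = ⌊(n+1)/3⌋` and `g(n) = α/(l+α)·Π₂(l)` with `l = ⌊(n+2)/3⌋`. Since every factor of `Π₃`
is the reciprocal of a factor of `Π₁Π₂` times a telescoping ratio, `Π₁(k)Π₂(k)Π₃(k)·2α² = (k+α)(k+2α)`,
which gives `h` directly. The formula for `w(3k)` then follows by induction, adding the three
values of `h` on each block of length three, and `w(3k+1)`, `w(3k+2)` are one step away.
-/

lemma natCast_add_one_sub_pos (n : ℕ) {c : ℝ} (hc : c < 1) : 0 < (n : ℝ) + 1 - c := by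
  have := n.cast_nonneg (α := ℝ)
  linarith

section ThirdField

variable {α : ℝ}

@[simp] lemma Pi1_zero : Pi1 α 0 = 1 := Finset.prod_range_zero _

@[simp] lemma Pi2_zero : Pi2 α 0 = 1 := Finset.prod_range_zero _

@[simp] lemma Pi3_zero : Pi3 α 0 = 1 := Finset.prod_range_zero _

lemma Pi1_succ (k : ℕ) :
    Pi1 α (k + 1) = Pi1 α k * (((k : ℝ) + 1 + 2 * α) / ((k : ℝ) + 1 - α)) :=
  Finset.prod_range_succ _ k

lemma Pi2_succ (k : ℕ) :
    Pi2 α (k + 1) = Pi2 α k * (((k : ℝ) + 1 + α) / ((k : ℝ) + 1 - 2 * α)) :=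
  Finset.prod_range_succ _ k

lemma Pi3_succ (k : ℕ) :
    Pi3 α (k + 1) =
      Pi3 α k * (((k : ℝ) + 1 - α) * ((k : ℝ) + 1 - 2 * α) / (((k : ℝ) + α) * ((k : ℝ) + 2 * α))) :=
  Finset.prod_range_succ _ k

lemma Pi1_pos (hα0 : 0 < α) (hα : α < 1 / 2) (k : ℕ) : 0 < Pi1 α k :=
  Finset.prod_pos fun j _ =>
    div_pos (by positivity) (natCast_add_one_sub_pos j (by linarith))

lemma Pi2_pos (hα0 : 0 < α) (hα : α < 1 / 2) (k : ℕ) : 0 < Pi2 α k :=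
  Finset.prod_pos fun j _ =>
    div_pos (by positivity) (natCast_add_one_sub_pos j (by linarith))

lemma Pi1_mul_Pi2_mul_Pi3 (hα0 : 0 < α) (hα : α < 1 / 2) (k : ℕ) :
    Pi1 α k * Pi2 α k * Pi3 α k * (2 * α ^ 2) = ((k : ℝ) + α) * ((k : ℝ) + 2 * α) := by
  induction k with
  | zero => simp only [Pi1_zero, Pi2_zero, Pi3_zero, Nat.cast_zero]; ring
  | succ k ih =>
    have h1 := (natCast_add_one_sub_pos k (c := α) (by linarith)).ne'
    have h2 := (natCast_add_one_sub_pos k (c := 2 * α) (by linarith)).ne'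
    calc Pi1 α (k + 1) * Pi2 α (k + 1) * Pi3 α (k + 1) * (2 * α ^ 2)
        = Pi1 α k * Pi2 α k * Pi3 α k * (2 * α ^ 2) *
            (((k : ℝ) + 1 + 2 * α) * ((k : ℝ) + 1 + α) / (((k : ℝ) + α) * ((k : ℝ) + 2 * α))) := by
          rw [Pi1_succ, Pi2_succ, Pi3_succ]
          field_simp
      _ = ((↑(k + 1) : ℝ) + α) * ((↑(k + 1) : ℝ) + 2 * α) := by
          rw [ih]
          push_cast
          field_simp

lemma Pi3_eq_div (hα0 : 0 < α) (hα : α < 1 / 2) (k : ℕ) :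
    Pi3 α k = ((k : ℝ) + α) * ((k : ℝ) + 2 * α) / (2 * α ^ 2 * Pi1 α k * Pi2 α k) := by
  have := (Pi1_pos hα0 hα k).ne'
  have := (Pi2_pos hα0 hα k).ne'
  rw [← Pi1_mul_Pi2_mul_Pi3 hα0 hα k]
  field_simp

lemma fSeq_eq (hα : α ≠ 0) (n : ℕ) :
    fSeq α n = 2 * α / (((n + 1) / 3 : ℕ) + 2 * α) * Pi1 α ((n + 1) / 3) := by
  unfold fSeq
  split_ifs with hn
  · obtain rfl | rfl : n = 0 ∨ n = 1 := by omega
    all_goals simp [hα]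
  · rfl

lemma gSeq_eq (hα : α ≠ 0) (n : ℕ) :
    gSeq α n = α / (((n + 2) / 3 : ℕ) + α) * Pi2 α ((n + 2) / 3) := by
  unfold gSeq
  split_ifs with hn
  · simp [hn, hα]
  · rfl

variable (hα0 : 0 < α) (hα : α < 1 / 2)
include hα0 hα

lemma hSeq_three_mul (k : ℕ) : hSeq α (3 * k) = Pi3 α k := by
  have := (Pi1_pos hα0 hα k).ne'
  have := (Pi2_pos hα0 hα k).ne'
  rw [hSeq, fSeq_eq hα0.ne', gSeq_eq hα0.ne', show (3 * k + 1) / 3 = k by omega,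
    show (3 * k + 2) / 3 = k by omega, Pi3_eq_div hα0 hα]
  field_simp

lemma hSeq_three_mul_add_one (k : ℕ) :
    hSeq α (3 * k + 1) = ((k : ℝ) + 1 - 2 * α) / ((k : ℝ) + α) * Pi3 α k := by
  have := (Pi1_pos hα0 hα k).ne'
  have := (Pi2_pos hα0 hα k).ne'
  have := (natCast_add_one_sub_pos k (c := 2 * α) (by linarith)).ne'
  rw [hSeq, fSeq_eq hα0.ne', gSeq_eq hα0.ne', show (3 * k + 1 + 1) / 3 = k by omega,
    show (3 * k + 1 + 2) / 3 = k + 1 by omega, Pi2_succ, Pi3_eq_div hα0 hα]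
  push_cast
  field_simp

lemma hSeq_three_mul_add_two (k : ℕ) : hSeq α (3 * k + 2) = Pi3 α (k + 1) := by
  have := (Pi1_pos hα0 hα (k + 1)).ne'
  have := (Pi2_pos hα0 hα (k + 1)).ne'
  rw [hSeq, fSeq_eq hα0.ne', gSeq_eq hα0.ne', show (3 * k + 2 + 1) / 3 = k + 1 by omega,
    show (3 * k + 2 + 2) / 3 = k + 1 by omega, Pi3_eq_div hα0 hα]
  field_simp

lemma wSeq_three_mul (k : ℕ) : wSeq α (3 * k) = (k : ℝ) / (1 - 2 * α) * Pi3 α k := by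
  have : 1 - 2 * α ≠ 0 := by linarith
  induction k with
  | zero => simp [wSeq]
  | succ k ih =>
    calc wSeq α (3 * (k + 1))
        = wSeq α (3 * k) + hSeq α (3 * k) + hSeq α (3 * k + 1) + hSeq α (3 * k + 2) := rfl
      _ = _ := by
        rw [ih, hSeq_three_mul hα0 hα, hSeq_three_mul_add_one hα0 hα, hSeq_three_mul_add_two hα0 hα,
          Pi3_succ]
        push_cast
        field_simp
        ring

lemma wSeq_three_mul_add_one (k : ℕ) :
    wSeq α (3 * k + 1) = ((k : ℝ) + 1 - 2 * α) / (1 - 2 * α) * Pi3 α k := by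
  have : 1 - 2 * α ≠ 0 := by linarith
  rw [wSeq, wSeq_three_mul hα0 hα, hSeq_three_mul hα0 hα]
  field_simp
  ring

lemma wSeq_three_mul_add_two (k : ℕ) :
    wSeq α (3 * k + 2) = ((k : ℝ) + 2 * α) / (1 - 2 * α) * Pi3 α (k + 1) := by
  have : 1 - 2 * α ≠ 0 := by linarith
  have hw : wSeq α (3 * (k + 1)) = wSeq α (3 * k + 2) + hSeq α (3 * k + 2) := rfl
  rw [wSeq_three_mul hα0 hα, hSeq_three_mul_add_two hα0 hα] at hw
  rw [eq_sub_of_add_eq hw.symm]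
  push_cast
  field_simp
  ring

end ThirdField

/-- Closed formulas for the third field `h` and its potential `w`. -/
theorem closed_formulas_third_field
    (α : ℝ) (hα0 : 0 < α) (hα : α < 1 / 2) :
    (∀ k : ℕ, hSeq α (3 * k) = Pi3 α k ∧
      hSeq α (3 * k + 1) = (((k : ℝ) + 1 - 2 * α) / ((k : ℝ) + α)) * Pi3 α k) ∧
    (∀ k : ℕ, 1 ≤ k → hSeq α (3 * k - 1) = Pi3 α k) ∧
    (∀ k : ℕ, wSeq α (3 * k) = ((k : ℝ) / (1 - 2 * α)) * Pi3 α k ∧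
      wSeq α (3 * k + 1) = (((k : ℝ) + 1 - 2 * α) / (1 - 2 * α)) * Pi3 α k) ∧
    (∀ k : ℕ, 1 ≤ k →
      wSeq α (3 * k - 1) = (((k : ℝ) - 1 + 2 * α) / (1 - 2 * α)) * Pi3 α k) := by
  refine ⟨fun k => ⟨hSeq_three_mul hα0 hα k, hSeq_three_mul_add_one hα0 hα k⟩, ?_,
    fun k => ⟨wSeq_three_mul hα0 hα k, wSeq_three_mul_add_one hα0 hα k⟩, ?_⟩
  all_goals
    rintro (_ | k) hk
    · omega
    rw [show 3 * (k + 1) - 1 = 3 * k + 2 by omega]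
  · exact hSeq_three_mul_add_two hα0 hα k
  · rw [wSeq_three_mul_add_two hα0 hα k]
    push_cast
    ring
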